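/- arXiv:2404.10326 — 7 statements merged into one kernel-verified Lean document; each statement's English description precedes it below -/
import Mathlib

section
/- Let y ∈ Δⁿ. Then the relative interior of the normal cone N_{Δⁿ}(y) equals the set of vectors τe − w with τ ∈ ℝ and w ∈ ℝⁿ₊ such that wᵢ = 0 if and only if yᵢ > 0. -/
/-!
Fix `i₀` in the support of `y`. Testing against the vertices of the simplex shows that the normal
cone at `y` consists of the `ξ` that attain their maximum at every point of the support of `y`.
This cone contains `0` and spans the subspace of vectors constant on the support; inside that
subspace it is cut out by the inequalities `ξ i ≤ ξ i₀` for `i` outside the support, so its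
relative interior is where these are strict. Writing `τ = ξ i₀` and `w = τ - ξ` gives the claim.
-/

open Filter Topology RealInnerProductSpace

theorem mem_intrinsicInterior_iff_mem_nhdsWithin {𝕜 V P : Type*} [Ring 𝕜] [AddCommGroup V]
    [Module 𝕜 V] [TopologicalSpace P] [AddTorsor V P] {s : Set P} {x : P} :
    x ∈ intrinsicInterior 𝕜 s ↔
      x ∈ (affineSpan 𝕜 s : Set P) ∧ s ∈ 𝓝[(affineSpan 𝕜 s : Set P)] x := by
  rw [mem_intrinsicInterior]
  constructor
  · rintro ⟨x', hx', rfl⟩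
    refine ⟨x'.2, ?_⟩
    rw [← map_nhds_subtype_val, mem_map]
    exact mem_interior_iff_mem_nhds.mp hx'
  · rintro ⟨hx, hs⟩
    refine ⟨⟨x, hx⟩, ?_, rfl⟩
    rw [mem_interior_iff_mem_nhds, ← mem_map, map_nhds_subtype_val]
    exact hs

theorem eventually_add_smul_mem_of_mem_nhdsWithin {𝕜 E : Type*} [Semiring 𝕜] [TopologicalSpace 𝕜]
    [AddCommMonoid E] [Module 𝕜 E] [TopologicalSpace E] [ContinuousAdd E] [ContinuousSMul 𝕜 E]
    {L : Submodule 𝕜 E} {s : Set E} {v u : E} (hv : v ∈ L) (hu : u ∈ L)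
    (hs : s ∈ 𝓝[(L : Set E)] v) : ∀ᶠ t in 𝓝 (0 : 𝕜), v + t • u ∈ s := by
  have hline : Tendsto (fun t : 𝕜 => v + t • u) (𝓝 0) (𝓝[(L : Set E)] v) := by
    refine tendsto_nhdsWithin_iff.2 ⟨?_, .of_forall fun t => L.add_mem hv (L.smul_mem t hu)⟩
    exact Continuous.tendsto' (by fun_prop) 0 v (by simp)
  exact hline.eventually hs

section StdSimplex

variable {ι : Type*} [Fintype ι] {x ξ : ι → ℝ} {M : ℝ}

theorem exists_pos_of_mem_stdSimplex (hx : x ∈ stdSimplex ℝ ι) : ∃ i, 0 < x i := by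
  by_contra! h
  have : ∑ i, x i = 0 := Finset.sum_eq_zero fun i _ => le_antisymm (h i) (hx.1 i)
  simp [hx.2] at this

theorem sum_mul_le_of_mem_stdSimplex (hx : x ∈ stdSimplex ℝ ι) (h : ∀ i, ξ i ≤ M) :
    ∑ i, ξ i * x i ≤ M :=
  calc ∑ i, ξ i * x i ≤ ∑ i, M * x i :=
        Finset.sum_le_sum fun i _ => mul_le_mul_of_nonneg_right (h i) (hx.1 i)
    _ = M := by rw [← Finset.mul_sum, hx.2, mul_one]

theorem sum_mul_eq_iff_of_mem_stdSimplex (hx : x ∈ stdSimplex ℝ ι) (h : ∀ i, ξ i ≤ M) :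
    ∑ i, ξ i * x i = M ↔ ∀ i, 0 < x i → ξ i = M := by
  have hgap : ∑ i, x i * (M - ξ i) = M - ∑ i, ξ i * x i :=
    calc ∑ i, x i * (M - ξ i) = M * ∑ i, x i - ∑ i, ξ i * x i := by
          rw [Finset.mul_sum, ← Finset.sum_sub_distrib]
          exact Finset.sum_congr rfl fun i _ => by ring
      _ = M - ∑ i, ξ i * x i := by rw [hx.2, mul_one]
  rw [eq_comm, ← sub_eq_zero, ← hgap, Finset.sum_eq_zero_iff_of_nonneg fun i _ =>
    mul_nonneg (hx.1 i) (sub_nonneg.2 (h i))]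
  refine forall_congr' fun i => ?_
  simp only [Finset.mem_univ, true_implies, mul_eq_zero, sub_eq_zero, eq_comm (a := M)]
  constructor
  · rintro (h0 | heq) hpos
    · exact absurd h0 hpos.ne'
    · exact heq
  · intro himp
    rcases (hx.1 i).eq_or_lt with h0 | hpos
    · exact .inl h0.symm
    · exact .inr (himp hpos)

end StdSimplex

section NormalCone

variable {ι : Type*}

def eqOnSupport (y : EuclideanSpace ℝ ι) (i₀ : ι) : Submodule ℝ (EuclideanSpace ℝ ι) where
  carrier := {ξ | ∀ i, 0 < y i → ξ i = ξ i₀}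
  add_mem' ha hb i hi := by simp [ha i hi, hb i hi]
  zero_mem' _ _ := rfl
  smul_mem' c _ ha i hi := by simp [ha i hi]

def maxOnSupport (y : EuclideanSpace ℝ ι) (i₀ : ι) : Set (EuclideanSpace ℝ ι) :=
  {ξ | (∀ i, ξ i ≤ ξ i₀) ∧ ξ ∈ eqOnSupport y i₀}

variable {y : EuclideanSpace ℝ ι} {i₀ : ι}

theorem normalCone_stdSimplex_eq_maxOnSupport [Fintype ι] (hy : y.ofLp ∈ stdSimplex ℝ ι)
    (hi₀ : 0 < y i₀) :
    {ξ : EuclideanSpace ℝ ι |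
        ∀ x : EuclideanSpace ℝ ι, x.ofLp ∈ stdSimplex ℝ ι → ⟪ξ, x - y⟫ ≤ 0}
      = maxOnSupport y i₀ := by
  classical
  have hinner : ∀ ξ x : EuclideanSpace ℝ ι, ⟪ξ, x⟫ = ∑ i, ξ i * x i := fun ξ x => by
    simp [PiLp.inner_apply, mul_comm]
  ext ξ
  simp only [Set.mem_ofPred_eq, inner_sub_right]
  constructor
  · intro h
    have hle : ∀ i, ξ i ≤ ⟪ξ, y⟫ := fun i => by
      have := h (EuclideanSpace.single i 1) (by simpa using single_mem_stdSimplex ℝ i)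
      rw [EuclideanSpace.inner_single_right] at this
      simpa using this
    have hmax := (sum_mul_eq_iff_of_mem_stdSimplex hy hle).1 (hinner ξ y).symm
    exact ⟨fun i => hmax i₀ hi₀ ▸ hle i, fun i hi => (hmax i hi).trans (hmax i₀ hi₀).symm⟩
  · rintro ⟨hle, hsupp⟩ x hx
    rw [hinner, hinner, (sum_mul_eq_iff_of_mem_stdSimplex hy hle).2 hsupp, sub_nonpos]
    exact sum_mul_le_of_mem_stdSimplex hx hle

theorem zero_mem_maxOnSupport : (0 : EuclideanSpace ℝ ι) ∈ maxOnSupport y i₀ :=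
  ⟨fun _ => le_rfl, zero_mem _⟩

theorem span_maxOnSupport : Submodule.span ℝ (maxOnSupport y i₀) = eqOnSupport y i₀ := by
  refine le_antisymm (Submodule.span_le.2 fun ξ hξ => hξ.2) fun ξ hξ => ?_
  set a : EuclideanSpace ℝ ι := WithLp.toLp 2 fun i => min (ξ i) (ξ i₀)
  have ha : a ∈ maxOnSupport y i₀ :=
    ⟨fun i => by simp [a], fun i hi => by simp [a, hξ i hi]⟩
  have hb : a - ξ ∈ maxOnSupport y i₀ :=
    ⟨fun i => by simp [a], fun i hi => by simp [a, hξ i hi]⟩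
  simpa using Submodule.sub_mem _ (Submodule.subset_span ha) (Submodule.subset_span hb)

theorem coe_affineSpan_maxOnSupport :
    (affineSpan ℝ (maxOnSupport y i₀) : Set (EuclideanSpace ℝ ι)) = eqOnSupport y i₀ := by
  rw [← Set.insert_eq_of_mem zero_mem_maxOnSupport, affineSpan_insert_zero, span_maxOnSupport]

theorem intrinsicInterior_maxOnSupport [Fintype ι] (hi₀ : 0 < y i₀) :
    intrinsicInterior ℝ (maxOnSupport y i₀)
      = {v | v ∈ eqOnSupport y i₀ ∧ ∀ i, ¬ 0 < y i → v i < v i₀} := by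
  classical
  ext v
  rw [mem_intrinsicInterior_iff_mem_nhdsWithin, coe_affineSpan_maxOnSupport]
  constructor
  · rintro ⟨hvL, hN⟩
    refine ⟨hvL, fun i hi => ?_⟩
    have hi₀i : i ≠ i₀ := by rintro rfl; exact hi hi₀
    -- raising `v i` keeps `v` in `eqOnSupport`, hence in the cone for small steps
    have hu : EuclideanSpace.single i (1 : ℝ) ∈ eqOnSupport y i₀ := fun j hj => by
      have hji : j ≠ i := by rintro rfl; exact hi hj
      simp [hji, hi₀i.symm]
    have hline : ∀ᶠ t in 𝓝[>] (0 : ℝ),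
        v + t • EuclideanSpace.single i (1 : ℝ) ∈ maxOnSupport y i₀ :=
      (eventually_add_smul_mem_of_mem_nhdsWithin hvL hu hN).filter_mono nhdsWithin_le_nhds
    obtain ⟨t, htN, ht⟩ := (hline.and self_mem_nhdsWithin).exists
    have hstep : v i + t ≤ v i₀ := by simpa [hi₀i.symm] using htN.1 i
    linarith
  · rintro ⟨hvL, hlt⟩
    refine ⟨hvL, mem_nhdsWithin.2 ⟨{z | ∀ i, ¬ 0 < y i → z i < z i₀}, ?_, hlt, ?_⟩⟩
    · simp only [Set.ofPred_forall]
      exact isOpen_iInter_of_finite fun i => isOpen_iInter_of_finite fun _ =>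
        isOpen_lt (EuclideanSpace.proj i).continuous (EuclideanSpace.proj i₀).continuous
    · rintro z ⟨hzU, hzL⟩
      refine ⟨fun i => ?_, hzL⟩
      by_cases hi : 0 < y i
      · exact (hzL i hi).le
      · exact (hzU i hi).le

theorem exists_eq_const_sub_iff (hi₀ : 0 < y i₀) {v : EuclideanSpace ℝ ι} :
    (∃ (τ : ℝ) (w : EuclideanSpace ℝ ι),
        (∀ i, 0 ≤ w i) ∧ (∀ i, w i = 0 ↔ 0 < y i) ∧ ∀ i, v i = τ - w i)
      ↔ v ∈ eqOnSupport y i₀ ∧ ∀ i, ¬ 0 < y i → v i < v i₀ := by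
  constructor
  · rintro ⟨τ, w, hw, hwy, hv⟩
    have hvτ : ∀ i, 0 < y i → v i = τ := fun i hi => by rw [hv i, (hwy i).2 hi, sub_zero]
    refine ⟨fun i hi => (hvτ i hi).trans (hvτ i₀ hi₀).symm, fun i hi => ?_⟩
    have hwi : 0 < w i := (hw i).lt_of_ne' fun h => hi ((hwy i).1 h)
    rw [hv i, hvτ i₀ hi₀]
    linarith
  · rintro ⟨hvL, hlt⟩
    refine ⟨v i₀, WithLp.toLp 2 fun i => v i₀ - v i, fun i => ?_, fun i => ?_, fun i => ?_⟩
    · by_cases hi : 0 < y i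
      · simp [hvL i hi]
      · simpa using (hlt i hi).le
    · by_cases hi : 0 < y i
      · simp [hi, hvL i hi]
      · simpa [hi, sub_eq_zero] using (hlt i hi).ne'
    · simp

end NormalCone

/-- The relative interior of the normal cone of the probability simplex at `y`
consists of vectors `τ e - w` with `w ≥ 0` and `wᵢ = 0 ↔ yᵢ > 0`. -/
theorem relint_normalCone_stdSimplex (n : ℕ) (y : EuclideanSpace ℝ (Fin n))
    (hy : y.ofLp ∈ stdSimplex ℝ (Fin n)) :
    intrinsicInterior ℝ
        {ξ : EuclideanSpace ℝ (Fin n) |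
          ∀ x : EuclideanSpace ℝ (Fin n), x.ofLp ∈ stdSimplex ℝ (Fin n) → ⟪ξ, x - y⟫ ≤ 0}
      = {v : EuclideanSpace ℝ (Fin n) | ∃ (τ : ℝ) (w : EuclideanSpace ℝ (Fin n)),
          (∀ i, 0 ≤ w i) ∧ (∀ i, w i = 0 ↔ 0 < y i) ∧ ∀ i, v i = τ - w i} := by
  obtain ⟨i₀, hi₀⟩ := exists_pos_of_mem_stdSimplex hy
  rw [normalCone_stdSimplex_eq_maxOnSupport hy hi₀, intrinsicInterior_maxOnSupport hi₀]
  ext v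
  exact (exists_eq_const_sub_iff hi₀).symm
end

section
/- Let x* ∈ argmin f where f = max{f₁,…,f_N} with each fᵢ convex and differentiable. If 0 ∈ relint ∂f(x*), then for every i with fᵢ(x*) = f(x*) there exists y ∈ Λ(x*) with yᵢ > 0; that is, I(x*) = I⁺(x*). -/
/-!
Let `i` be active. Its gradient `g i xs` lies in the hull `C` of the active gradients, and since
`0` lies in the relative interior of `C`, the segment from `g i xs` through `0` can be prolonged
inside `C` to a point `-δ • g i xs` with `δ > 0`. Writing that point as a convex combination of
active gradients and averaging it with `g i xs` (weights `1 : δ`) gives a convex combination of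
active gradients equal to `0` with positive weight on `i`; being supported on active indices, it
averages the values `f j xs` to `F xs`. Conversely, a weighted average of the values
`f j xs ≤ F xs` can equal `F xs` only if every index of positive weight is active.
-/

section StdSimplex

variable {ι : Type*} [Fintype ι]

theorem exists_mem_stdSimplex_of_mem_convexHull_image {E : Type*} [AddCommGroup E] [Module ℝ E]
    {v : ι → E} {A : Set ι} {z : E} (hz : z ∈ convexHull ℝ (v '' A)) :
    ∃ w ∈ stdSimplex ℝ ι, (∀ j ∉ A, w j = 0) ∧ ∑ j, w j • v j = z := by
  classical
  let W : Set (ι → ℝ) := stdSimplex ℝ ι ∩ {w | ∀ j ∉ A, w j = 0}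
  have hW : Convex ℝ W := (convex_stdSimplex ℝ ι).inter fun w hw w' hw' a b _ _ _ j hj => by
    simp [hw j hj, hw' j hj]
  suffices convexHull ℝ (v '' A) ⊆ Fintype.linearCombination ℝ v '' W by
    obtain ⟨w, ⟨hw, hwA⟩, rfl⟩ := this hz
    exact ⟨w, hw, hwA, Fintype.linearCombination_apply ℝ v w⟩
  refine convexHull_min ?_ (hW.linear_image _)
  rintro _ ⟨i, hi, rfl⟩
  refine ⟨Pi.single i 1, ⟨single_mem_stdSimplex ℝ i, fun j hj => ?_⟩, by simp⟩
  exact Pi.single_eq_of_ne (ne_of_mem_of_not_mem hi hj).symm 1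

theorem sum_mul_eq_of_mem_stdSimplex {w a : ι → ℝ} {M : ℝ} (hw : w ∈ stdSimplex ℝ ι)
    (h : ∀ j, a j ≠ M → w j = 0) : ∑ j, w j * a j = M :=
  calc ∑ j, w j * a j = ∑ j, w j * M :=
        Finset.sum_congr rfl fun j _ => by by_cases hj : a j = M <;> simp [hj, h j]
    _ = M := by rw [← Finset.sum_mul, hw.2, one_mul]

theorem eq_of_sum_mul_eq_of_mem_stdSimplex {w a : ι → ℝ} {M : ℝ} (hw : w ∈ stdSimplex ℝ ι)
    (ha : ∀ j, a j ≤ M) (hsum : ∑ j, w j * a j = M) {i : ι} (hi : 0 < w i) : a i = M := by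
  by_contra hne
  have hlt : ∑ j, w j * a j < ∑ j, w j * M :=
    Finset.sum_lt_sum (fun j _ => mul_le_mul_of_nonneg_left (ha j) (hw.1 j))
      ⟨i, Finset.mem_univ i, mul_lt_mul_of_pos_left ((ha i).lt_of_ne hne) hi⟩
  rw [← Finset.sum_mul, hw.2, one_mul] at hlt
  exact hlt.ne hsum

end StdSimplex

section IntrinsicInterior

variable {E : Type*} [AddCommGroup E] [Module ℝ E] [TopologicalSpace E]
  [IsTopologicalAddGroup E] [ContinuousSMul ℝ E]

theorem exists_pos_smul_sub_add_mem_of_mem_intrinsicInterior {s : Set E} {x b : E}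
    (hx : x ∈ intrinsicInterior ℝ s) (hb : b ∈ affineSpan ℝ s) :
    ∃ δ : ℝ, 0 < δ ∧ δ • (x - b) + x ∈ s := by
  obtain ⟨x', hx', rfl⟩ := mem_intrinsicInterior.mp hx
  let c : ℝ → affineSpan ℝ s := fun δ =>
    ⟨δ • (x' - b) + x', (affineSpan ℝ s).smul_vsub_vadd_mem δ x'.2 hb x'.2⟩
  have hc : Continuous c := by fun_prop
  have hc0 : c 0 = x' := by ext; simp [c]
  have hnhds : ∀ᶠ δ in nhds (0 : ℝ), c δ ∈ interior (((↑) : affineSpan ℝ s → E) ⁻¹' s) :=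
    hc.continuousAt.preimage_mem_nhds (hc0 ▸ isOpen_interior.mem_nhds hx')
  obtain ⟨δ, hδ, hδpos⟩ := ((hnhds.filter_mono nhdsWithin_le_nhds).and
      (self_mem_nhdsWithin : Set.Ioi (0 : ℝ) ∈ nhdsWithin 0 (Set.Ioi 0))).exists
  exact ⟨δ, hδpos, interior_subset (s := ((↑) : affineSpan ℝ s → E) ⁻¹' s) hδ⟩

theorem exists_mem_stdSimplex_sum_smul_eq_zero_pos_of_zero_mem_intrinsicInterior
    {ι : Type*} [Fintype ι] {v : ι → E} {A : Set ι}
    (h0 : (0 : E) ∈ intrinsicInterior ℝ (convexHull ℝ (v '' A))) {i : ι} (hi : i ∈ A) :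
    ∃ y ∈ stdSimplex ℝ ι, (∀ j ∉ A, y j = 0) ∧ ∑ j, y j • v j = 0 ∧ 0 < y i := by
  classical
  have hvi : v i ∈ convexHull ℝ (v '' A) := subset_convexHull ℝ _ ⟨i, hi, rfl⟩
  obtain ⟨δ, hδ, hδmem⟩ :=
    exists_pos_smul_sub_add_mem_of_mem_intrinsicInterior h0 (subset_affineSpan ℝ _ hvi)
  obtain ⟨μ, hμ, hμA, hμsum⟩ := exists_mem_stdSimplex_of_mem_convexHull_image hδmem
  have hδ1 : 0 < 1 + δ := by linarith
  set a := δ / (1 + δ)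
  set b := 1 / (1 + δ)
  have hab : a + b = 1 := by rw [← add_div, add_comm, div_self hδ1.ne']
  have hba : b * δ = a := one_div_mul_eq_div _ _
  refine ⟨a • Pi.single i 1 + b • μ,
    convex_stdSimplex ℝ ι (single_mem_stdSimplex ℝ i) hμ (by positivity) (by positivity) hab,
    fun j hj => ?_, ?_, ?_⟩
  · simp [Pi.single_eq_of_ne (ne_of_mem_of_not_mem hi hj).symm, hμA j hj]
  · calc ∑ j, (a • Pi.single i 1 + b • μ : ι → ℝ) j • v j = a • v i + b • ∑ j, μ j • v j := by
          simp [add_smul, mul_smul, Finset.sum_add_distrib, ← Finset.smul_sum, Pi.single_apply]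
      _ = 0 := by
          rw [hμsum, zero_sub, add_zero, smul_neg, smul_neg, smul_smul, hba, add_neg_cancel]
  · have := hμ.1 i
    simp only [Pi.add_apply, Pi.smul_apply, Pi.single_eq_same, smul_eq_mul, mul_one]
    positivity

end IntrinsicInterior

theorem active_eq_strongActive_of_nondegenerate_general {H : Type*} [NormedAddCommGroup H]
    [InnerProductSpace ℝ H]
    (N : ℕ) [NeZero N] (f : Fin N → H → ℝ) (g : Fin N → H → H)
    (F : H → ℝ)
    (hF : ∀ x, F x = Finset.univ.sup' Finset.univ_nonempty (fun i => f i x))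
    (xs : H)
    (hnd : (0 : H) ∈ intrinsicInterior ℝ
        (convexHull ℝ ((fun i => g i xs) '' {i | f i xs = F xs}))) :
    {i : Fin N | f i xs = F xs}
      = {i : Fin N | ∃ y ∈ stdSimplex ℝ (Fin N),
          (∑ j, y j • g j xs) = 0 ∧ (∑ j, y j * f j xs) = F xs ∧ 0 < y i} := by
  have hle : ∀ j, f j xs ≤ F xs := fun j =>
    hF xs ▸ Finset.le_sup' (fun i => f i xs) (Finset.mem_univ j)
  ext i
  constructor
  · intro hi
    obtain ⟨y, hy, hyA, hy0, hyi⟩ :=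
      exists_mem_stdSimplex_sum_smul_eq_zero_pos_of_zero_mem_intrinsicInterior hnd hi
    exact ⟨y, hy, hy0, sum_mul_eq_of_mem_stdSimplex hy hyA, hyi⟩
  · rintro ⟨y, hy, -, hyF, hyi⟩
    exact eq_of_sum_mul_eq_of_mem_stdSimplex hy hle hyF hyi

/-- Nondegeneracy `0 ∈ relint ∂f(x*)` implies that every active index is strongly
active: `I(x*) = I⁺(x*)`. -/
theorem active_eq_strongActive_of_nondegenerate {H : Type*} [NormedAddCommGroup H]
    [InnerProductSpace ℝ H] [FiniteDimensional ℝ H]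
    (N : ℕ) [NeZero N] (f : Fin N → H → ℝ) (g : Fin N → H → H)
    (hconv : ∀ i, ConvexOn ℝ Set.univ (f i))
    (hg : ∀ i x, HasGradientAt (f i) (g i x) x)
    (F : H → ℝ)
    (hF : ∀ x, F x = Finset.univ.sup' Finset.univ_nonempty (fun i => f i x))
    (xs : H) (hmin : ∀ x, F xs ≤ F x)
    (hnd : (0 : H) ∈ intrinsicInterior ℝ
        (convexHull ℝ ((fun i => g i xs) '' {i | f i xs = F xs}))) :
    {i : Fin N | f i xs = F xs}
      = {i : Fin N | ∃ y ∈ stdSimplex ℝ (Fin N),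
          (∑ j, y j • g j xs) = 0 ∧ (∑ j, y j * f j xs) = F xs ∧ 0 < y i} :=
  active_eq_strongActive_of_nondegenerate_general N f g F hF xs hnd
end

section
/- Let x* ∈ argmin f where f = max{f₁,…,f_N} with each fᵢ convex and differentiable. If I(x*) = I⁺(x*), then 0 ∈ relint ∂f(x*). -/
theorem aux_relint {H : Type*} [NormedAddCommGroup H] [NormedSpace ℝ H]
    [FiniteDimensional ℝ H] {ι : Type*} (s : Finset ι) (p : ι → H) (w : ι → ℝ)
    (hw : ∀ i ∈ s, 0 < w i) (hsum : ∑ i ∈ s, w i = 1)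
    (hcomb : ∑ i ∈ s, w i • p i = 0) :
    (0 : H) ∈ intrinsicInterior ℝ (convexHull ℝ (p '' ↑s)) := by
  classical
  set P : Set H := p '' ↑s with hP
  set S : Set H := convexHull ℝ P with hS
  set V : Submodule ℝ H := Submodule.span ℝ P with hV
  have hPV : P ⊆ (V : Set H) := Submodule.subset_span
  -- the combination map
  let T : ({ x // x ∈ s } → ℝ) →ₗ[ℝ] H :=
    { toFun := fun c => ∑ i : { x // x ∈ s }, c i • p i
      map_add' := by
        intro a b
        simp [add_smul, Finset.sum_add_distrib]
      map_smul' := by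
        intro r a
        simp [smul_smul, Finset.smul_sum] }
  have hTmem : ∀ c, T c ∈ V := by
    intro c
    exact Submodule.sum_mem _ fun i _ =>
      Submodule.smul_mem _ _ (hPV (Set.mem_image_of_mem p i.2))
  let T' : ({ x // x ∈ s } → ℝ) →ₗ[ℝ] V := T.codRestrict V hTmem
  have hrange : LinearMap.range T' = ⊤ := by
    have hsub : V ≤ LinearMap.range T := by
      rw [hV, Submodule.span_le]
      rintro x ⟨i, hi, rfl⟩
      refine ⟨Pi.single ⟨i, hi⟩ 1, ?_⟩
      show ∑ j : { x // x ∈ s }, Pi.single (⟨i, hi⟩ : { x // x ∈ s }) 1 j • p ↑j = p i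
      rw [Finset.sum_eq_single (⟨i, hi⟩ : { x // x ∈ s })]
      · simp
      · intro b _ hb; rw [Pi.single_eq_of_ne hb]; simp
      · simp
    rw [LinearMap.range_eq_top]
    intro v
    obtain ⟨c, hc⟩ := hsub v.2
    exact ⟨c, Subtype.ext hc⟩
  obtain ⟨σ, hσ⟩ := T'.exists_rightInverse_of_surjective hrange
  have hσap : ∀ v : V, T (σ v) = (v : H) := by
    intro v
    have := congrArg (fun (φ : V →ₗ[ℝ] V) => ((φ v : V) : H)) hσ
    simpa [T'] using this
  have hσcont : Continuous σ := σ.continuous_of_finiteDimensional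
  -- the corrected weights
  let μ : V → { x // x ∈ s } → ℝ :=
    fun v i => w i + σ v i - (∑ j, σ v j) * w i
  have hμcont : ∀ i, Continuous fun v => μ v i := by
    intro i
    apply Continuous.sub
    · exact continuous_const.add ((continuous_apply i).comp hσcont)
    · exact (Continuous.mul (continuous_finset_sum _ fun j _ =>
        (continuous_apply j).comp hσcont) continuous_const)
  let U : Set V := ⋂ i, {v : V | 0 < μ v i}
  have hUopen : IsOpen U :=
    isOpen_iInter_of_finite fun i => (isOpen_lt continuous_const (hμcont i))
  have h0U : (0 : V) ∈ U := by
    simp only [U, Set.mem_iInter, Set.mem_setOf_eq, μ, map_zero]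
    intro i
    simpa using hw i i.2
  -- membership in convex hull for v ∈ U
  have hUS : ∀ v ∈ U, (v : H) ∈ S := by
    intro v hv
    have hμpos : ∀ i, 0 < μ v i := by
      simpa only [U, Set.mem_iInter, Set.mem_setOf_eq] using hv
    set ω : ι → ℝ := fun i => if h : i ∈ s then μ v ⟨i, h⟩ else 0 with hω
    have hωs : ∀ i (h : i ∈ s), ω i = μ v ⟨i, h⟩ := by
      intro i h; simp [ω, h]
    have hsum1 : ∑ i ∈ s, ω i = 1 := by
      rw [← Finset.sum_coe_sort s ω]
      have : ∀ i : { x // x ∈ s }, ω ↑i = μ v i := fun i => hωs i i.2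
      rw [Finset.sum_congr rfl fun i _ => this i]
      simp only [μ]
      rw [Finset.sum_sub_distrib, Finset.sum_add_distrib, ← Finset.mul_sum]
      rw [Finset.sum_coe_sort s w, hsum]
      ring
    have hcomb1 : ∑ i ∈ s, ω i • p i = (v : H) := by
      rw [← Finset.sum_coe_sort s (fun i => ω i • p i)]
      have : ∀ i : { x // x ∈ s }, ω ↑i • p ↑i = μ v i • p ↑i := fun i => by
        rw [hωs i i.2]
      rw [Finset.sum_congr rfl fun i _ => this i]
      simp only [μ, sub_smul, add_smul, mul_smul]
      rw [Finset.sum_sub_distrib, Finset.sum_add_distrib, ← Finset.smul_sum]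
      have h1 : ∑ i : { x // x ∈ s }, w ↑i • p ↑i = 0 := by
        rw [Finset.sum_coe_sort s (fun i => w i • p i)]; exact hcomb
      have h2 : ∑ i : { x // x ∈ s }, σ v i • p ↑i = (v : H) := hσap v
      rw [h1, h2, smul_zero]
      simp
    have : s.centerMass ω p ∈ convexHull ℝ P := by
      apply Finset.centerMass_mem_convexHull
      · intro i hi; rw [hωs i hi]; exact (hμpos _).le
      · rw [hsum1]; exact one_pos
      · intro i hi; exact Set.mem_image_of_mem p hi
    rwa [Finset.centerMass_eq_of_sum_1 _ _ hsum1, hcomb1] at this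
  -- 0 ∈ S
  have h0S : (0 : H) ∈ S := hUS 0 h0U
  -- affine span and direction
  have h0E : (0 : H) ∈ affineSpan ℝ S := subset_affineSpan ℝ S h0S
  have hEV : ∀ z : H, z ∈ affineSpan ℝ S → z ∈ V := by
    intro z hz
    have hd : z -ᵥ (0 : H) ∈ (affineSpan ℝ S).direction :=
      AffineSubspace.vsub_mem_direction hz h0E
    rw [hS, affineSpan_convexHull, direction_affineSpan, vectorSpan_def] at hd
    have hle : Submodule.span ℝ (P -ᵥ P) ≤ V := by
      rw [Submodule.span_le]
      rintro x ⟨a, ha, b, hb, rfl⟩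
      exact Submodule.sub_mem _ (hPV ha) (hPV hb)
    have := hle hd
    simpa using this
  -- conclude
  obtain ⟨ε, hε, hball⟩ := Metric.isOpen_iff.1 hUopen 0 h0U
  rw [mem_intrinsicInterior]
  refine ⟨⟨0, h0E⟩, ?_, rfl⟩
  rw [mem_interior_iff_mem_nhds, Metric.mem_nhds_iff]
  refine ⟨ε, hε, ?_⟩
  rintro ⟨z, hz⟩ hzd
  have hzV : z ∈ V := hEV z hz
  have : (⟨z, hzV⟩ : V) ∈ Metric.ball (0 : V) ε := by
    rw [Metric.mem_ball] at hzd ⊢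
    rw [Subtype.dist_eq] at hzd ⊢
    simpa using hzd
  exact hUS _ (hball this)

/-- If every active index is strongly active, `I(x*) = I⁺(x*)`, then the
nondegeneracy condition `0 ∈ relint ∂f(x*)` holds. -/
theorem nondegenerate_of_active_eq_strongActive {H : Type*} [NormedAddCommGroup H]
    [InnerProductSpace ℝ H] [FiniteDimensional ℝ H]
    (N : ℕ) [NeZero N] (f : Fin N → H → ℝ) (g : Fin N → H → H)
    (hconv : ∀ i, ConvexOn ℝ Set.univ (f i))
    (hg : ∀ i x, HasGradientAt (f i) (g i x) x)
    (F : H → ℝ)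
    (hF : ∀ x, F x = Finset.univ.sup' Finset.univ_nonempty (fun i => f i x))
    (xs : H) (hmin : ∀ x, F xs ≤ F x)
    (heq : {i : Fin N | f i xs = F xs}
      = {i : Fin N | ∃ y ∈ stdSimplex ℝ (Fin N),
          (∑ j, y j • g j xs) = 0 ∧ (∑ j, y j * f j xs) = F xs ∧ 0 < y i}) :
    (0 : H) ∈ intrinsicInterior ℝ
        (convexHull ℝ ((fun i => g i xs) '' {i | f i xs = F xs})) := by
  classical
  set A : Finset (Fin N) := Finset.univ.filter (fun i => f i xs = F xs) with hA
  have hAset : {i : Fin N | f i xs = F xs} = (A : Set (Fin N)) := by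
    ext i; simp [hA]
  have hle : ∀ j, f j xs ≤ F xs := by
    intro j
    rw [hF]
    exact Finset.le_sup' (fun i => f i xs) (Finset.mem_univ j)
  -- A is nonempty
  have hAne : A.Nonempty := by
    obtain ⟨i, _, hi⟩ := Finset.exists_mem_eq_sup'
      (s := (Finset.univ : Finset (Fin N))) Finset.univ_nonempty (fun i => f i xs)
    exact ⟨i, by simp [hA, (hF xs).trans hi]⟩
  -- extract multipliers
  have hstrong : ∀ i ∈ A, ∃ y : Fin N → ℝ, (∀ j, 0 ≤ y j) ∧ (∑ j, y j = 1) ∧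
      (∑ j, y j • g j xs) = 0 ∧ (∑ j, y j * f j xs) = F xs ∧ 0 < y i := by
    intro i hi
    have hiA : i ∈ {i : Fin N | f i xs = F xs} := by
      rw [hAset]; exact_mod_cast hi
    rw [heq] at hiA
    obtain ⟨y, hy, h1, h2, h3⟩ := hiA
    exact ⟨y, hy.1, hy.2, h1, h2, h3⟩
  choose! y hy0 hy1 hyg hyf hypos using hstrong
  -- supports are contained in A
  have hsupp : ∀ i ∈ A, ∀ j, j ∉ A → y i j = 0 := by
    intro i hi j hj
    by_contra hne
    have hpos : 0 < y i j := lt_of_le_of_ne (hy0 i hi j) (Ne.symm hne)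
    have hzero : ∑ k, y i k * (F xs - f k xs) = 0 := by
      have : ∑ k, y i k * (F xs - f k xs)
          = (∑ k, y i k) * F xs - ∑ k, y i k * f k xs := by
        rw [Finset.sum_mul]
        rw [← Finset.sum_sub_distrib]
        congr 1; ext k; ring
      rw [this, hy1 i hi, hyf i hi, one_mul, sub_self]
    have hterm : y i j * (F xs - f j xs) = 0 := by
      have := (Finset.sum_eq_zero_iff_of_nonneg
        (fun k _ => mul_nonneg (hy0 i hi k) (sub_nonneg.2 (hle k)))).1 hzero
      exact this j (Finset.mem_univ j)
    have : f j xs = F xs := by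
      rcases mul_eq_zero.1 hterm with h | h
      · exact absurd h (ne_of_gt hpos)
      · linarith [sub_eq_zero.1 h]
    exact hj (by simp [hA, this])
  -- the averaged multiplier
  set n : ℝ := (A.card : ℝ) with hn
  have hnpos : 0 < n := by
    rw [hn]; exact_mod_cast Finset.card_pos.2 hAne
  set w : Fin N → ℝ := fun j => n⁻¹ * ∑ i ∈ A, y i j with hw
  have hwpos : ∀ j ∈ A, 0 < w j := by
    intro j hj
    apply mul_pos (inv_pos.2 hnpos)
    apply Finset.sum_pos'
    · intro i hi; exact hy0 i hi j
    · exact ⟨j, hj, hypos j hj⟩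
  -- full sums restrict to A
  have hrestrictR : ∀ i ∈ A, ∑ j ∈ A, y i j = ∑ j, y i j := by
    intro i hi
    apply Finset.sum_subset (Finset.subset_univ A)
    intro j _ hj
    exact hsupp i hi j hj
  have hrestrictH : ∀ i ∈ A, ∑ j ∈ A, y i j • g j xs = ∑ j, y i j • g j xs := by
    intro i hi
    apply Finset.sum_subset (Finset.subset_univ A)
    intro j _ hj
    rw [hsupp i hi j hj, zero_smul]
  have hwsum : ∑ j ∈ A, w j = 1 := by
    simp only [hw, ← Finset.mul_sum]
    rw [Finset.sum_comm]
    have : ∀ i ∈ A, ∑ j ∈ A, y i j = 1 := by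
      intro i hi
      rw [hrestrictR i hi]
      exact hy1 i hi
    rw [Finset.sum_congr rfl this, Finset.sum_const, nsmul_eq_mul]
    rw [mul_one, ← hn, inv_mul_cancel₀ (ne_of_gt hnpos)]
  have hwcomb : ∑ j ∈ A, w j • g j xs = 0 := by
    have key : ∑ j ∈ A, (∑ i ∈ A, y i j) • g j xs = 0 := by
      calc ∑ j ∈ A, (∑ i ∈ A, y i j) • g j xs
          = ∑ j ∈ A, ∑ i ∈ A, y i j • g j xs := by
            refine Finset.sum_congr rfl fun j _ => ?_
            rw [Finset.sum_smul]
        _ = ∑ i ∈ A, ∑ j ∈ A, y i j • g j xs := Finset.sum_comm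
        _ = 0 := Finset.sum_eq_zero fun i hi => by
            rw [hrestrictH i hi]
            exact hyg i hi
    have hstep : ∑ j ∈ A, w j • g j xs
        = n⁻¹ • ∑ j ∈ A, (∑ i ∈ A, y i j) • g j xs := by
      rw [Finset.smul_sum]
      refine Finset.sum_congr rfl fun j _ => ?_
      show (n⁻¹ * ∑ i ∈ A, y i j) • g j xs = _
      rw [mul_smul]
    rw [hstep, key, smul_zero]
  rw [hAset]
  exact aux_relint A (fun i => g i xs) w hwpos hwsum hwcomb
end

section
/- Let x* ∈ argmin f with f = max{f₁,…,f_N}, each fᵢ convex differentiable. If Λ(x*) is a singleton, then the gradients {∇fᵢ(x*) : i ∈ I⁺(x*)} are affinely independent. -/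
/-- If the multiplier set `Λ(x*)` is a singleton, then the gradients of the
strongly active subfunctions are affinely independent. -/
theorem affineIndependent_of_multiplier_unique {H : Type*} [NormedAddCommGroup H]
    [InnerProductSpace ℝ H] [FiniteDimensional ℝ H]
    (N : ℕ) [NeZero N] (f : Fin N → H → ℝ) (g : Fin N → H → H)
    (hconv : ∀ i, ConvexOn ℝ Set.univ (f i))
    (hg : ∀ i x, HasGradientAt (f i) (g i x) x)
    (F : H → ℝ)
    (hF : ∀ x, F x = Finset.univ.sup' Finset.univ_nonempty (fun i => f i x))
    (xs : H) (hmin : ∀ x, F xs ≤ F x)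
    (Lam : Set (Fin N → ℝ))
    (hLam : Lam = {y | y ∈ stdSimplex ℝ (Fin N) ∧
        (∑ j, y j • g j xs) = 0 ∧ (∑ j, y j * f j xs) = F xs})
    (hsingle : ∃ y, Lam = {y}) :
    ∀ α : Fin N → ℝ,
        (∀ i, ¬ (∃ y ∈ Lam, 0 < y i) → α i = 0) →
        (∑ i, α i • g i xs) = 0 → (∑ i, α i) = 0 → ∀ i, α i = 0 := by
  obtain ⟨ys, hys⟩ := hsingle
  have hysLam : ys ∈ Lam := by rw [hys]; exact rfl
  have hysLam' := hysLam
  rw [hLam] at hysLam'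
  obtain ⟨⟨hnn, hsum1⟩, hgrad, hval⟩ := hysLam'
  intro α hsupp hgsum hasum
  -- each i with α i ≠ 0 has ys i > 0
  have hα : ∀ j, α j ≠ 0 → 0 < ys j := by
    intro j hj
    by_contra hpos
    apply hj
    apply hsupp
    rintro ⟨y, hy, hy'⟩
    rw [hys] at hy
    exact hpos (hy ▸ hy')
  -- active functions attain the max
  have hle : ∀ j, f j xs ≤ F xs := by
    intro j; rw [hF]; exact Finset.le_sup' (fun i => f i xs) (Finset.mem_univ j)
  have hzero : ∀ j ∈ Finset.univ, ys j * (F xs - f j xs) = 0 := by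
    rw [← Finset.sum_eq_zero_iff_of_nonneg]
    · have : ∑ j, ys j * (F xs - f j xs)
          = (∑ j, ys j) * F xs - ∑ j, ys j * f j xs := by
        rw [Finset.sum_mul, ← Finset.sum_sub_distrib]
        congr 1; ext j; ring
      rw [this, hsum1, hval]; ring
    · intro j _
      exact mul_nonneg (hnn j) (sub_nonneg.mpr (hle j))
  have hactive : ∀ j, 0 < ys j → f j xs = F xs := by
    intro j hj
    have := hzero j (Finset.mem_univ j)
    have h2 : F xs - f j xs = 0 := by
      rcases mul_eq_zero.mp this with h | h
      · exact absurd h (ne_of_gt hj)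
      · exact h
    linarith
  -- choose ε
  set ε : ℝ := Finset.univ.inf' Finset.univ_nonempty
      (fun j => if α j = 0 then 1 else ys j / |α j|) with hε_def
  have hεpos : 0 < ε := by
    rw [Finset.lt_inf'_iff]
    intro j _
    by_cases hj : α j = 0
    · simp [hj]
    · simp only [hj, if_false]
      exact div_pos (hα j hj) (abs_pos.mpr hj)
  have hεle : ∀ j, α j ≠ 0 → ε * |α j| ≤ ys j := by
    intro j hj
    have h1 : ε ≤ ys j / |α j| := by
      have h0 := Finset.inf'_le (fun j => if α j = 0 then 1 else ys j / |α j|)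
        (Finset.mem_univ j)
      simp only [if_neg hj] at h0
      exact h0
    rw [← le_div_iff₀ (abs_pos.mpr hj)] at *
    exact h1
  -- the perturbed multiplier
  set z : Fin N → ℝ := fun j => ys j + ε * α j with hz_def
  have hαf : ∀ j, α j * f j xs = α j * F xs := by
    intro j
    by_cases hj : α j = 0
    · simp [hj]
    · rw [hactive j (hα j hj)]
  have hzLam : z ∈ Lam := by
    rw [hLam]
    refine ⟨⟨fun j => ?_, ?_⟩, ?_, ?_⟩
    · by_cases hj : α j = 0
      · simp [hz_def, hj, hnn j]
      · have h1 := hεle j hj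
        have h2 : -|α j| ≤ α j := neg_abs_le _
        have : -(ε * |α j|) ≤ ε * α j := by nlinarith
        simp only [hz_def]
        linarith
    · simp only [hz_def]
      rw [Finset.sum_add_distrib, hsum1, ← Finset.mul_sum, hasum]
      ring
    · have : ∑ j, z j • g j xs
          = (∑ j, ys j • g j xs) + ε • (∑ j, α j • g j xs) := by
        rw [Finset.smul_sum, ← Finset.sum_add_distrib]
        congr 1; ext j
        simp only [hz_def]
        rw [add_smul, smul_smul]
      rw [this, hgrad, hgsum, smul_zero, add_zero]
    · have : ∑ j, z j * f j xs
          = (∑ j, ys j * f j xs) + ε * (∑ j, α j * f j xs) := by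
        rw [Finset.mul_sum, ← Finset.sum_add_distrib]
        congr 1; ext j
        simp only [hz_def]; ring
      rw [this, hval]
      have h3 : ∑ j, α j * f j xs = 0 := by
        calc ∑ j, α j * f j xs = ∑ j, α j * F xs := by
              exact Finset.sum_congr rfl fun j _ => hαf j
          _ = (∑ j, α j) * F xs := by rw [Finset.sum_mul]
          _ = 0 := by rw [hasum]; ring
      rw [h3]; ring
  have hz_eq : z = ys := by
    rw [hys] at hzLam
    exact hzLam
  intro i
  have := congrFun hz_eq i
  simp only [hz_def] at this
  have h4 : ε * α i = 0 := by linarith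
  rcases mul_eq_zero.mp h4 with h | h
  · exact absurd h (ne_of_gt hεpos)
  · exact h
end

section
/- Let f = max{f₁,…,f_N} with fᵢ convex differentiable, let (xᵏ) → x* ∈ argmin f with dist(0, ∂f(xᵏ)) → 0. Assume 0 ∈ relint ∂f(x*) (nondegeneracy) and Λ(x*) is a singleton. Then there exists k₀ such that I(xᵏ) = I(x*) for all k ≥ k₀. -/
/-!
Nondegeneracy forces the unique multiplier `y ∈ Λ(x*)` to be strictly positive on the whole
active set `I(x*)`: pushing the barycentre of the active gradients slightly beyond `0` stays in
`∂f(x*)`, and mixing the two convex combinations gives a multiplier charging every active index.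
Continuity gives `I(xᵏ) ⊆ I(x*)` eventually. If some `i ∈ I(x*)` were inactive at infinitely many
`xᵏ`, the weights of the minimal-norm elements of `∂f(xᵏ)` along those `k` would accumulate at a
multiplier at `x*` vanishing at `i`, which contradicts uniqueness.
-/

open Filter Topology Set

section Weights

variable {ι : Type*} [Fintype ι]

def stdSimplexOn (A : Set ι) : Set (ι → ℝ) :=
  {w | w ∈ stdSimplex ℝ ι ∧ ∀ j ∉ A, w j = 0}

theorem convex_stdSimplexOn (A : Set ι) : Convex ℝ (stdSimplexOn A) := by
  rintro w ⟨hw, hwA⟩ u ⟨hu, huA⟩ a b ha hb hab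
  exact ⟨convex_stdSimplex ℝ ι hw hu ha hb hab, fun j hj => by simp [hwA j hj, huA j hj]⟩

theorem isClosed_stdSimplexOn (A : Set ι) : IsClosed (stdSimplexOn A) := by
  have hsupp : {w : ι → ℝ | ∀ j ∉ A, w j = 0} = ⋂ j ∈ Aᶜ, {w | w j = 0} := by ext; simp
  refine (isClosed_stdSimplex ℝ ι).inter (?_ : IsClosed {w : ι → ℝ | ∀ j ∉ A, w j = 0})
  rw [hsupp]
  exact isClosed_biInter fun j _ => isClosed_eq (continuous_apply j) continuous_const

theorem isCompact_stdSimplexOn (A : Set ι) : IsCompact (stdSimplexOn A) :=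
  (isCompact_stdSimplex ℝ ι).of_isClosed_subset (isClosed_stdSimplexOn A) fun _ hw => hw.1

theorem sum_mul_eq_of_mem_stdSimplexOn {a : ι → ℝ} {c : ℝ} {w : ι → ℝ}
    (hw : w ∈ stdSimplexOn {j | a j = c}) : ∑ j, w j * a j = c := by
  calc ∑ j, w j * a j = ∑ j, w j * c := by
        refine Finset.sum_congr rfl fun j _ => ?_
        by_cases hj : a j = c
        · rw [hj]
        · rw [hw.2 j hj, zero_mul, zero_mul]
    _ = c := by rw [← Finset.sum_mul, hw.1.2, one_mul]

variable {E : Type*} [AddCommGroup E] [Module ℝ E]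

theorem convexHull_image_eq_image_stdSimplexOn (v : ι → E) (A : Set ι) :
    convexHull ℝ (v '' A) = Fintype.linearCombination ℝ v '' stdSimplexOn A := by
  classical
  refine Subset.antisymm (convexHull_min ?_ ((convex_stdSimplexOn A).linear_image _)) ?_
  · rintro _ ⟨j, hj, rfl⟩
    refine ⟨Pi.single j 1, ⟨single_mem_stdSimplex ℝ j, fun i hi => ?_⟩, by simp⟩
    exact Pi.single_eq_of_ne (ne_of_mem_of_not_mem hj hi).symm 1
  · rintro _ ⟨w, ⟨⟨hw0, hw1⟩, hwA⟩, rfl⟩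
    have hsupp : ∀ j ∈ Finset.univ, w j ≠ 0 → j ∈ A := fun j _ hj =>
      by_contra fun h => hj (hwA j h)
    rw [Fintype.linearCombination_apply,
      ← Finset.sum_filter_of_ne fun j hj hne => hsupp j hj (left_ne_zero_of_smul hne)]
    refine (convex_convexHull ℝ _).sum_mem (fun j _ => hw0 j) ?_
      fun j hj => subset_convexHull ℝ _ ⟨j, (Finset.mem_filter.1 hj).2, rfl⟩
    rwa [Finset.sum_filter_of_ne hsupp]

theorem exists_neg_smul_mem_of_zero_mem_intrinsicInterior [TopologicalSpace E]
    [ContinuousSMul ℝ E] {C : Set E} (hC : (0 : E) ∈ intrinsicInterior ℝ C) {b : E} (hb : b ∈ C) :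
    ∃ ε > (0 : ℝ), (-ε) • b ∈ C := by
  obtain ⟨p, hp, hp0⟩ := hC
  have hline : ∀ t : ℝ, t • b ∈ affineSpan ℝ C := fun t => by
    have h0 : (0 : E) ∈ affineSpan ℝ C := hp0 ▸ p.2
    simpa using AffineSubspace.smul_vsub_vadd_mem _ t (subset_affineSpan ℝ C hb) h0 h0
  let c : ℝ → affineSpan ℝ C := fun t => ⟨t • b, hline t⟩
  have hc0 : c 0 = p := Subtype.ext (by simp [c, hp0])
  have hnear : ∀ᶠ t in 𝓝 (0 : ℝ), t • b ∈ C :=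
    ((continuous_id.smul continuous_const).subtype_mk hline).tendsto' 0 p hc0
      |>.eventually (mem_interior_iff_mem_nhds.1 hp)
  obtain ⟨t, htC, ht⟩ := ((hnear.filter_mono nhdsWithin_le_nhds).and
    (self_mem_nhdsWithin : Iio (0 : ℝ) ∈ 𝓝[<] 0)).exists
  exact ⟨-t, neg_pos.2 ht, by rwa [neg_neg]⟩

theorem exists_pos_mem_stdSimplexOn_of_zero_mem_intrinsicInterior
    [TopologicalSpace E] [ContinuousSMul ℝ E] (v : ι → E) {A : Set ι}
    (h : (0 : E) ∈ intrinsicInterior ℝ (convexHull ℝ (v '' A))) :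
    ∃ w ∈ stdSimplexOn A, (∀ j ∈ A, 0 < w j) ∧ ∑ j, w j • v j = 0 := by
  classical
  have hA : A.toFinset.Nonempty := by
    refine Set.toFinset_nonempty.2 (nonempty_iff_ne_empty.2 fun hA => ?_)
    rwa [hA, image_empty, convexHull_empty, intrinsicInterior_empty] at h
  set c : ι → ℝ := fun j => if j ∈ A.toFinset then (A.toFinset.card : ℝ)⁻¹ else 0
  have hc : c ∈ stdSimplexOn A := by
    refine ⟨⟨fun j => by positivity, ?_⟩, fun j hj => by simp [c, hj]⟩
    rw [Finset.sum_ite_mem, Finset.univ_inter, Finset.sum_const, nsmul_eq_mul,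
      mul_inv_cancel₀ (by positivity)]
  set L := Fintype.linearCombination ℝ v
  rw [convexHull_image_eq_image_stdSimplexOn] at h
  obtain ⟨ε, hε, u, hu, hLu⟩ : ∃ ε > (0 : ℝ), ∃ u ∈ stdSimplexOn A, L u = (-ε) • L c :=
    let ⟨ε, hε, hεc⟩ := exists_neg_smul_mem_of_zero_mem_intrinsicInterior h ⟨c, hc, rfl⟩
    ⟨ε, hε, hεc⟩
  -- `L u + ε • L c = 0`, so the normalised `u + ε • c` is a multiplier, positive wherever `c` is.
  refine ⟨(1 + ε)⁻¹ • u + (ε * (1 + ε)⁻¹) • c,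
    convex_stdSimplexOn A hu hc (by positivity) (by positivity) (by field_simp), fun j hj => ?_, ?_⟩
  · have := hu.1.1 j
    simp only [Pi.add_apply, Pi.smul_apply, smul_eq_mul, c, Set.mem_toFinset.2 hj, if_true]
    positivity
  · rw [← Fintype.linearCombination_apply, map_add, map_smul, map_smul, hLu, smul_smul,
      ← add_smul]
    convert zero_smul ℝ (L c) using 2
    ring

theorem exists_mem_stdSimplexOn_norm_eq_infDist {E : Type*} [NormedAddCommGroup E]
    [NormedSpace ℝ E] (v : ι → E) {A : Set ι} (hA : A.Nonempty) :
    ∃ w ∈ stdSimplexOn A, ‖∑ j, w j • v j‖ = Metric.infDist 0 (convexHull ℝ (v '' A)) := by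
  obtain ⟨p, hp, hpd⟩ := ((A.toFinite.image v).isCompact_convexHull ℝ).exists_infDist_eq_dist
    (hA.image v).convexHull 0
  rw [convexHull_image_eq_image_stdSimplexOn] at hp
  obtain ⟨w, hw, rfl⟩ := hp
  exact ⟨w, hw, by rw [hpd, dist_zero_left, Fintype.linearCombination_apply]⟩

theorem exists_mem_sum_smul_eq_zero_of_frequently_mem [TopologicalSpace E] [ContinuousAdd E]
    [ContinuousSMul ℝ E] [T2Space E] {K : Set (ι → ℝ)} (hK : IsCompact K) {W : ℕ → ι → ℝ}
    (hWK : ∃ᶠ k in atTop, W k ∈ K) {u : ℕ → ι → E} {a : ι → E}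
    (hu : ∀ j, Tendsto (fun k => u k j) atTop (𝓝 (a j)))
    (hW : Tendsto (fun k => ∑ j, W k j • u k j) atTop (𝓝 0)) :
    ∃ w ∈ K, ∑ j, w j • a j = 0 := by
  obtain ⟨φ, hφ, hφK⟩ := extraction_of_frequently_atTop hWK
  obtain ⟨w, hwK, ψ, hψ, hlim⟩ := hK.tendsto_subseq hφK
  have hσ : Tendsto (φ ∘ ψ) atTop atTop := (hφ.comp hψ).tendsto_atTop
  refine ⟨w, hwK, tendsto_nhds_unique ?_ (hW.comp hσ)⟩
  exact tendsto_finsetSum _ fun j _ =>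
    (((continuous_apply j).tendsto w).comp hlim).smul ((hu j).comp hσ)

end Weights

theorem eventually_setOf_eq_subset {ι α X Y : Type*} [Finite ι] [TopologicalSpace X]
    [TopologicalSpace Y] [T2Space Y] {f : ι → X → Y} {F : X → Y} {xs : X}
    (hf : ∀ i, ContinuousAt (f i) xs) (hF : ContinuousAt F xs) {l : Filter α} {x : α → X}
    (hx : Tendsto x l (𝓝 xs)) :
    ∀ᶠ k in l, {i | f i (x k) = F (x k)} ⊆ {i | f i xs = F xs} := by
  refine eventually_all.2 fun i => ?_
  by_cases hi : f i xs = F xs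
  · exact .of_forall fun _ _ => hi
  · exact (hx.eventually (((hf i).ne_iff_eventually_ne hF).1 hi)).mono fun _ hk h => absurd h hk

theorem active_set_identification_general {H : Type*} [NormedAddCommGroup H]
    [InnerProductSpace ℝ H] [FiniteDimensional ℝ H]
    (N : ℕ) [NeZero N] (f : Fin N → H → ℝ) (g : Fin N → H → H)
    (hg : ∀ i x, HasGradientAt (f i) (g i x) x)
    (hgc : ∀ i, Continuous (g i))
    (F : H → ℝ)
    (hF : ∀ x, F x = Finset.univ.sup' Finset.univ_nonempty (fun i => f i x))
    (x : ℕ → H) (xs : H) (hx : Tendsto x atTop (𝓝 xs))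
    (hdist : Tendsto (fun k => Metric.infDist (0 : H)
        (convexHull ℝ ((fun i => g i (x k)) '' {i | f i (x k) = F (x k)})))
      atTop (𝓝 0))
    (hnd : (0 : H) ∈ intrinsicInterior ℝ
        (convexHull ℝ ((fun i => g i xs) '' {i | f i xs = F xs})))
    (hsingle : ∃ y, {y' : Fin N → ℝ | y' ∈ stdSimplex ℝ (Fin N) ∧
        (∑ j, y' j • g j xs) = 0 ∧ (∑ j, y' j * f j xs) = F xs} = {y}) :
    ∃ k0, ∀ k ≥ k0, {i : Fin N | f i (x k) = F (x k)} = {i | f i xs = F xs} := by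
  have hfc : ∀ i, Continuous (f i) := fun i =>
    continuous_iff_continuousAt.2 fun z => (hg i z).hasFDerivAt.continuousAt
  have hFc : Continuous F := funext hF ▸ Continuous.finset_sup'_apply _ fun i _ => hfc i
  have hactive : ∀ z, {i | f i z = F z}.Nonempty := fun z =>
    let ⟨i, _, hi⟩ := Finset.exists_mem_eq_sup' Finset.univ_nonempty fun i => f i z
    ⟨i, (hi ▸ hF z).symm⟩
  obtain ⟨y, hy⟩ := hsingle
  have hΛ : ∀ w ∈ stdSimplexOn {i | f i xs = F xs}, ∑ j, w j • g j xs = 0 → w = y :=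
    fun w hw hw0 => hy.subset ⟨hw.1, hw0, sum_mul_eq_of_mem_stdSimplexOn hw⟩
  obtain ⟨w₀, hw₀, hw₀pos, hw₀sum⟩ :=
    exists_pos_mem_stdSimplexOn_of_zero_mem_intrinsicInterior (fun i => g i xs) hnd
  choose W hW hWnorm using fun k =>
    exists_mem_stdSimplexOn_norm_eq_infDist (fun j => g j (x k)) (hactive (x k))
  have hW0 : Tendsto (fun k => ∑ j, W k j • g j (x k)) atTop (𝓝 0) :=
    tendsto_zero_iff_norm_tendsto_zero.2 (funext hWnorm ▸ hdist)
  have hsub := eventually_setOf_eq_subset (fun i => (hfc i).continuousAt) hFc.continuousAt hx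
  have hsup : ∀ᶠ k in atTop, {i | f i xs = F xs} ⊆ {i | f i (x k) = F (x k)} := by
    refine eventually_all.2 fun i => eventually_imp_distrib_left.2 fun hi => ?_
    by_contra hfreq
    obtain ⟨w, ⟨hw, hwi⟩, hw0⟩ := exists_mem_sum_smul_eq_zero_of_frequently_mem
      ((isCompact_stdSimplexOn _).inter_right (isClosed_eq (continuous_apply i) continuous_const))
      ((not_eventually.1 hfreq).and_eventually hsub |>.mono fun k ⟨hik, hk⟩ =>
        ⟨⟨(hW k).1, fun j hj => (hW k).2 j fun h => hj (hk h)⟩, (hW k).2 i hik⟩)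
      (fun j => ((hgc j).tendsto xs).comp hx) hW0
    rw [(hΛ w hw hw0).trans (hΛ w₀ hw₀ hw₀sum).symm] at hwi
    exact (hw₀pos i hi).ne' hwi
  obtain ⟨k0, hk0⟩ := eventually_atTop.1 (hsub.and hsup)
  exact ⟨k0, fun k hk => (hk0 k hk).1.antisymm (hk0 k hk).2⟩

/-- If `xᵏ → x* ∈ argmin f` with `dist(0, ∂f(xᵏ)) → 0`, and the nondegeneracy
condition `0 ∈ relint ∂f(x*)` holds and `Λ(x*)` is a singleton, then the active
set `I(xᵏ)` eventually equals `I(x*)`. -/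
theorem active_set_identification {H : Type*} [NormedAddCommGroup H]
    [InnerProductSpace ℝ H] [FiniteDimensional ℝ H]
    (N : ℕ) [NeZero N] (f : Fin N → H → ℝ) (g : Fin N → H → H)
    (hconv : ∀ i, ConvexOn ℝ Set.univ (f i))
    (hg : ∀ i x, HasGradientAt (f i) (g i x) x)
    (hgc : ∀ i, Continuous (g i))
    (F : H → ℝ)
    (hF : ∀ x, F x = Finset.univ.sup' Finset.univ_nonempty (fun i => f i x))
    (x : ℕ → H) (xs : H) (hx : Tendsto x atTop (𝓝 xs))
    (hmin : ∀ z, F xs ≤ F z)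
    (hdist : Tendsto (fun k => Metric.infDist (0 : H)
        (convexHull ℝ ((fun i => g i (x k)) '' {i | f i (x k) = F (x k)})))
      atTop (𝓝 0))
    (hnd : (0 : H) ∈ intrinsicInterior ℝ
        (convexHull ℝ ((fun i => g i xs) '' {i | f i xs = F xs})))
    (hsingle : ∃ y, {y' : Fin N → ℝ | y' ∈ stdSimplex ℝ (Fin N) ∧
        (∑ j, y' j • g j xs) = 0 ∧ (∑ j, y' j * f j xs) = F xs} = {y}) :
    ∃ k0, ∀ k ≥ k0, {i : Fin N | f i (x k) = F (x k)} = {i | f i xs = F xs} :=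
  active_set_identification_general N f g hg hgc F hF x xs hx hdist hnd hsingle
end

section
/- In the setting of the previous statement, assume additionally that Λ(x*) = {y*} is a singleton. Then there exists a neighbourhood N of (x*,y*) such that I⁺(x*) ⊆ I_⊕(x,y) ⊆ I(x*) for all (x,y) ∈ N, where I⁺(x*) = {i : yᵢ* > 0}. -/
open Topology

/-- If moreover `Λ(x*) = {y*}` is a singleton, then near the saddle point
`(x*,y*)` one has `I⁺(x*) ⊆ I_⊕(x,y) ⊆ I(x*)`, where `I⁺(x*) = {i : yᵢ* > 0}`. -/
theorem strongActive_subset_Ioplus_subset_active {H : Type*} [NormedAddCommGroup H]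
    [InnerProductSpace ℝ H] [FiniteDimensional ℝ H]
    (N : ℕ) [NeZero N] (f : Fin N → H → ℝ) (g : Fin N → H → H)
    (hconv : ∀ i, ConvexOn ℝ Set.univ (f i))
    (hg : ∀ i x, HasGradientAt (f i) (g i x) x)
    (F : H → ℝ)
    (hF : ∀ x, F x = Finset.univ.sup' Finset.univ_nonempty (fun i => f i x))
    (xs : H) (ys : Fin N → ℝ) (hys : ys ∈ stdSimplex ℝ (Fin N))
    (hsaddle : ∀ x : H, ∀ y ∈ stdSimplex ℝ (Fin N),
      (∑ i, y i * f i xs) ≤ (∑ i, ys i * f i xs) ∧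
      (∑ i, ys i * f i xs) ≤ ∑ i, ys i * f i x)
    (hsingle : {y : Fin N → ℝ | y ∈ stdSimplex ℝ (Fin N) ∧
        ∀ x : H, ∀ y' ∈ stdSimplex ℝ (Fin N),
          (∑ i, y' i * f i xs) ≤ (∑ i, y i * f i xs) ∧
          (∑ i, y i * f i xs) ≤ ∑ i, y i * f i x} = {ys}) :
    ∃ U ∈ 𝓝 ((xs, ys) : H × (Fin N → ℝ)), ∀ p ∈ U,
      (∀ i : Fin N, 0 < ys i → F p.1 - f i p.1 ≤ p.2 i) ∧
      (∀ i : Fin N, F p.1 - f i p.1 ≤ p.2 i → f i xs = F xs) := by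
  -- continuity of the f i's and of F
  have hfc : ∀ i, Continuous (f i) := fun i =>
    continuous_iff_continuousAt.2 fun x => (hg i x).hasFDerivAt.differentiableAt.continuousAt
  have hFc : Continuous F := by
    have : Continuous fun x => Finset.univ.sup' Finset.univ_nonempty (fun i => f i x) := by
      apply continuous_iff_continuousAt.2
      intro x
      exact ContinuousAt.finset_sup'_apply Finset.univ_nonempty
        (fun i _ => (hfc i).continuousAt)
    simpa [funext hF] using this
  -- each f i is ≤ F at every point
  have hle : ∀ i x, f i x ≤ F x := fun i x => by
    rw [hF]
    exact Finset.le_sup' (fun j => f j x) (Finset.mem_univ i)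
  -- value of φ at the saddle point equals F xs
  have hsum : (∑ i, ys i * f i xs) = F xs := by
    obtain ⟨j, -, hj⟩ := Finset.exists_mem_eq_sup' (Finset.univ_nonempty (α := Fin N))
      (fun i => f i xs)
    have hjmem : (Pi.single j 1 : Fin N → ℝ) ∈ stdSimplex ℝ (Fin N) := by
      constructor
      · intro i
        by_cases h : i = j <;> simp [Pi.single_apply, h]
      · simp [Pi.single_apply]
    have h1 := (hsaddle xs _ hjmem).1
    have h2 : (∑ i, (Pi.single j 1 : Fin N → ℝ) i * f i xs) = f j xs := by
      rw [Finset.sum_eq_single j]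
      · simp
      · intro i _ hi; simp [Pi.single_apply, hi]
      · simp
    have h3 : (∑ i, ys i * f i xs) ≤ F xs := by
      calc (∑ i, ys i * f i xs) ≤ ∑ i, ys i * F xs := by
            apply Finset.sum_le_sum
            intro i _
            exact mul_le_mul_of_nonneg_left (hle i xs) (hys.1 i)
        _ = F xs := by rw [← Finset.sum_mul, hys.2, one_mul]
    have h4 : F xs ≤ ∑ i, ys i * f i xs := by
      rw [hF, hj, ← h2]; exact h1
    linarith
  -- complementary slackness
  have hcs : ∀ i, 0 < ys i → f i xs = F xs := by
    intro i hi
    by_contra hne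
    have hlt : f i xs < F xs := lt_of_le_of_ne (hle i xs) hne
    have : (∑ j, ys j * f j xs) < F xs := by
      calc (∑ j, ys j * f j xs) < ∑ j, ys j * F xs := by
            apply Finset.sum_lt_sum
            · intro j _
              exact mul_le_mul_of_nonneg_left (hle j xs) (hys.1 j)
            · exact ⟨i, Finset.mem_univ i, by
                exact mul_lt_mul_of_pos_left hlt hi⟩
        _ = F xs := by rw [← Finset.sum_mul, hys.2, one_mul]
    linarith [hsum]
  -- conclude eventually
  rw [← Filter.eventually_iff_exists_mem]
  have key : ∀ i : Fin N, ∀ᶠ p : H × (Fin N → ℝ) in 𝓝 (xs, ys),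
      (0 < ys i → F p.1 - f i p.1 ≤ p.2 i) ∧
      (F p.1 - f i p.1 ≤ p.2 i → f i xs = F xs) := by
    intro i
    have hc : Continuous fun p : H × (Fin N → ℝ) => p.2 i - (F p.1 - f i p.1) :=
      ((continuous_apply i).comp continuous_snd).sub
        ((hFc.comp continuous_fst).sub ((hfc i).comp continuous_fst))
    by_cases hact : f i xs = F xs
    · by_cases hpos : 0 < ys i
      · have h0 : (0:ℝ) < ys i - (F xs - f i xs) := by rw [hact]; simpa using hpos
        have hev : ∀ᶠ p : H × (Fin N → ℝ) in 𝓝 (xs, ys),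
            0 < p.2 i - (F p.1 - f i p.1) :=
          (hc.continuousAt (x := (xs, ys))).eventually_const_lt h0
        filter_upwards [hev] with p hp
        exact ⟨fun _ => by linarith, fun _ => hact⟩
      · exact Filter.Eventually.of_forall fun p => ⟨fun h => absurd h hpos, fun _ => hact⟩
    · have hzero : ys i = 0 := by
        by_contra h
        exact hact (hcs i (lt_of_le_of_ne (hys.1 i) (Ne.symm h)))
      have h0 : ys i - (F xs - f i xs) < 0 := by
        have := lt_of_le_of_ne (hle i xs) hact
        rw [hzero]; linarith
      have hev : ∀ᶠ p : H × (Fin N → ℝ) in 𝓝 (xs, ys),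
          p.2 i - (F p.1 - f i p.1) < 0 := by
        exact (hc.continuousAt (x := (xs, ys))).eventually_lt_const h0
      filter_upwards [hev] with p hp
      constructor
      · intro h; exact absurd h (by rw [hzero] at h; exact absurd h (lt_irrefl 0))
      · intro h; linarith
  have := Filter.eventually_all.2 key
  filter_upwards [this] with p hp
  exact ⟨fun i => (hp i).1, fun i => (hp i).2⟩
end

section
/- Let f = max{f₁,…,f_N} with fᵢ convex differentiable, suppose x* is the unique minimizer of f, fix y* ∈ Λ(x*), and let ρ be an identification function for the saddle point set S. Then there is a neighbourhood N of (x*,y*) such that for all (x,y) ∈ N with y ∈ Δᴺ, the set A(x,y) = {i : f(x) − fᵢ(x) ≤ ρ(x,y)} equals I(x*). -/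
open Filter Topology
open scoped NNReal

/-- If `x*` is the unique minimiser of `f`, `y* ∈ Λ(x*)`, and `ρ` is an
identification function for the saddle point set `S`, then near `(x*,y*)` the
set `A(x,y) = {i : f(x) - fᵢ(x) ≤ ρ(x,y)}` equals `I(x*)`. -/
theorem identification_function_active_set {H : Type*} [NormedAddCommGroup H]
    [InnerProductSpace ℝ H] [FiniteDimensional ℝ H]
    (N : ℕ) [NeZero N] (f : Fin N → H → ℝ) (g : Fin N → H → H)
    (hconv : ∀ i, ConvexOn ℝ Set.univ (f i))
    (hg : ∀ i x, HasGradientAt (f i) (g i x) x)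
    (F : H → ℝ)
    (hF : ∀ x, F x = Finset.univ.sup' Finset.univ_nonempty (fun i => f i x))
    (xs : H) (hmin : ∀ z, F xs ≤ F z) (huniq : ∀ x, (∀ z, F x ≤ F z) → x = xs)
    (S : Set (H × (Fin N → ℝ)))
    (hS : S = {p : H × (Fin N → ℝ) | p.2 ∈ stdSimplex ℝ (Fin N) ∧
        ∀ x : H, ∀ y ∈ stdSimplex ℝ (Fin N),
          (∑ i, y i * f i p.1) ≤ (∑ i, p.2 i * f i p.1) ∧
          (∑ i, p.2 i * f i p.1) ≤ ∑ i, p.2 i * f i x})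
    (ys : Fin N → ℝ) (hys : ((xs, ys) : H × (Fin N → ℝ)) ∈ S)
    (ρ : H × (Fin N → ℝ) → ℝ)
    (hρcont : Continuous ρ) (hρnonneg : ∀ p, 0 ≤ ρ p)
    (hρzero : ∀ p ∈ S, ρ p = 0)
    (hρlim : ∀ s ∈ S, Tendsto (fun p => ρ p / Metric.infDist p S)
        (𝓝[Sᶜ] s) atTop) :
    ∃ U ∈ 𝓝 ((xs, ys) : H × (Fin N → ℝ)), ∀ p ∈ U, p.2 ∈ stdSimplex ℝ (Fin N) →
      {i : Fin N | F p.1 - f i p.1 ≤ ρ p} = {i | f i xs = F xs} := by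
  classical
  -- every saddle point has first coordinate xs
  have hfle : ∀ i x, f i x ≤ F x := by
    intro i x; rw [hF]; exact Finset.le_sup' (fun j => f j x) (Finset.mem_univ i)
  have hSsub : ∀ p ∈ S, p.1 = xs := by
    intro p hp
    rw [hS] at hp
    obtain ⟨hp2, hp3⟩ := hp
    apply huniq
    intro z
    have h1 : ∀ j, f j p.1 ≤ ∑ i, p.2 i * f i p.1 := by
      intro j
      have := (hp3 p.1 _ (single_mem_stdSimplex ℝ j)).1
      simpa [Pi.single_apply, ite_mul, Finset.sum_ite_eq'] using this
    have hFp : F p.1 ≤ ∑ i, p.2 i * f i p.1 := by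
      rw [hF]; exact Finset.sup'_le _ _ fun j _ => h1 j
    have h3 : (∑ i, p.2 i * f i z) ≤ F z := by
      calc (∑ i, p.2 i * f i z) ≤ ∑ i, p.2 i * F z :=
            Finset.sum_le_sum fun i _ =>
              mul_le_mul_of_nonneg_left (hfle i z) (hp2.1 i)
        _ = F z := by rw [← Finset.sum_mul, hp2.2, one_mul]
    exact hFp.trans ((hp3 z _ hp2).2.trans h3)
  have hxsys : (xs, ys) ∈ S := hys
  -- continuity
  have hcontf : ∀ i, Continuous (f i) :=
    fun i => continuous_iff_continuousAt.2 fun x => (hg i x).hasFDerivAt.differentiableAt.continuousAt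
  have hcontF : Continuous F := by
    have : Continuous fun x => Finset.univ.sup' Finset.univ_nonempty (fun i => f i x) :=
      Continuous.finset_sup'_apply _ fun i _ => hcontf i
    simpa [← funext hF] using this
  -- common Lipschitz constant near xs
  have hlip : ∃ K : ℝ, 0 ≤ K ∧ ∃ r > (0:ℝ), ∀ i, ∀ z ∈ Metric.ball xs r,
      |f i z - f i xs| ≤ K * dist z xs := by
    have h := fun i => (hconv i).locallyLipschitz xs
    choose K t ht hl using h
    have hInt : (⋂ i, t i) ∈ 𝓝 xs := Filter.iInter_mem.2 ht
    obtain ⟨r, hr, hball⟩ := Metric.mem_nhds_iff.1 hInt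
    set K0 : ℝ≥0 := Finset.univ.sup K with hK0
    refine ⟨(K0 : ℝ), K0.coe_nonneg, r, hr, fun i z hz => ?_⟩
    have hz' : z ∈ t i := Set.mem_iInter.1 (hball hz) i
    have hxs' : xs ∈ t i := mem_of_mem_nhds (ht i)
    have := (hl i).dist_le_mul z hz' xs hxs'
    simp only [Real.dist_eq] at this ⊢
    calc |f i z - f i xs| ≤ (K i : ℝ) * dist z xs := by
          simpa [Real.dist_eq, dist_eq_norm] using this
      _ ≤ (K0 : ℝ) * dist z xs := by
          gcongr
          exact_mod_cast Finset.le_sup (f := K) (Finset.mem_univ i)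
  obtain ⟨K, hK0, r, hr0, hlipK⟩ := hlip
  set M : ℝ := 2 * K + 1 with hM
  -- eventual facts
  have E1 : ∀ᶠ p in 𝓝 ((xs, ys) : H × (Fin N → ℝ)), p ∈ Sᶜ →
      M ≤ ρ p / Metric.infDist p S := by
    have := (hρlim _ hys).eventually_ge_atTop M
    rwa [eventually_nhdsWithin_iff] at this
  have E2 : ∀ᶠ p in 𝓝 ((xs, ys) : H × (Fin N → ℝ)), p.1 ∈ Metric.ball xs r := by
    have : ContinuousAt (Prod.fst : H × (Fin N → ℝ) → H) (xs, ys) := continuous_fst.continuousAt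
    exact this (Metric.ball_mem_nhds xs hr0)
  have E3 : ∀ᶠ p in 𝓝 ((xs, ys) : H × (Fin N → ℝ)),
      ∀ i, f i xs ≠ F xs → ρ p < F p.1 - f i p.1 := by
    rw [eventually_all]
    intro i
    by_cases hi : f i xs = F xs
    · filter_upwards with p h; exact absurd hi h
    · have hcont : ContinuousAt (fun p : H × (Fin N → ℝ) => F p.1 - f i p.1 - ρ p) (xs, ys) :=
        (((hcontF.comp continuous_fst).sub ((hcontf i).comp continuous_fst)).sub hρcont).continuousAt
      have hpos : (0:ℝ) < F xs - f i xs - ρ (xs, ys) := by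
        rw [hρzero _ hys]
        have := lt_of_le_of_ne (hfle i xs) hi
        linarith
      have hev := hcont.eventually (eventually_gt_nhds hpos)
      filter_upwards [hev] with p hp _
      have hp' : (0:ℝ) < F p.1 - f i p.1 - ρ p := hp
      linarith
  have hev : ∀ᶠ p in 𝓝 ((xs, ys) : H × (Fin N → ℝ)), p.2 ∈ stdSimplex ℝ (Fin N) →
      {i : Fin N | F p.1 - f i p.1 ≤ ρ p} = {i | f i xs = F xs} := by
    filter_upwards [E1, E2, E3] with p hp1 hp2 hp3
    intro hsimp
    ext i
    simp only [Set.mem_setOf_eq]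
    constructor
    · intro hA
      by_contra hi
      exact absurd hA (not_le.2 (hp3 i hi))
    · intro hi
      -- active constraint: F p.1 - f i p.1 ≤ ρ p
      by_cases hx : p.1 = xs
      · have : F p.1 - f i p.1 = 0 := by rw [hx, hi]; ring
        rw [this]; exact hρnonneg p
      · have hpS : p ∈ Sᶜ := fun hpS => hx (hSsub p hpS)
        have hd : 0 < dist p.1 xs := dist_pos.2 hx
        have hinf : dist p.1 xs ≤ Metric.infDist p S := by
          rw [Metric.infDist_eq_iInf]
          have : Nonempty S := ⟨⟨_, hys⟩⟩
          refine le_ciInf fun q => ?_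
          calc dist p.1 xs = dist p.1 q.1.1 := by rw [hSsub q.1 q.2]
            _ ≤ dist p q.1 := by rw [Prod.dist_eq]; exact le_max_left _ _
        have hinfpos : 0 < Metric.infDist p S := hd.trans_le hinf
        have hρge : M * Metric.infDist p S ≤ ρ p := by
          have := hp1 hpS
          rwa [le_div_iff₀ hinfpos] at this
      -- bound F p.1 - f i p.1 by 2K * dist
        obtain ⟨j, _, hj⟩ := Finset.exists_mem_eq_sup' (Finset.univ_nonempty (α := Fin N))
          (fun k => f k p.1)
        have hFj : F p.1 = f j p.1 := by rw [hF]; exact hj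
        have hji : f j xs ≤ f i xs := by rw [hi]; exact hfle j xs
        have h1 := hlipK j p.1 hp2
        have h2 := hlipK i p.1 hp2
        have habs1 : f j p.1 - f j xs ≤ K * dist p.1 xs := (abs_le.1 h1).2
        have habs2 : f i xs - f i p.1 ≤ K * dist p.1 xs := by
          have := (abs_le.1 h2).1; linarith
        have hbound : F p.1 - f i p.1 ≤ 2 * K * dist p.1 xs := by
          rw [hFj]; linarith
        calc F p.1 - f i p.1 ≤ 2 * K * dist p.1 xs := hbound
          _ ≤ M * Metric.infDist p S := by
              have h2K : (0:ℝ) ≤ 2 * K := by linarith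
              calc 2 * K * dist p.1 xs ≤ M * dist p.1 xs := by
                    apply mul_le_mul_of_nonneg_right _ hd.le
                    rw [hM]; linarith
                _ ≤ M * Metric.infDist p S := by
                    apply mul_le_mul_of_nonneg_left hinf
                    rw [hM]; linarith
          _ ≤ ρ p := hρge

  exact eventually_iff_exists_mem.1 hev
end
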